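/- In the setting of a diffeomorphism covariant Lagrangian L, suppose a local functional identity of the form Σ_{i=0}^{s-1} A_i · (symmetrized i-th derivative of δC) + B · L_ξ γ = 0 holds for all smooth vector fields ξ, where δC depends on up to 2 symmetrized derivatives of ξ and at a point the values of ξ and all its symmetrized derivatives up to any finite order can be prescribed independently. Then each coefficient A_i = 0 for i = 0,…,s-1. -/

import Mathlib

/-!
Prescribe the jets of `ξ` up to order `s + 1` to vanish except for the one of order `i + 2`,
which is set to `w`. The identity then collapses to `A i w + B (0, 0) = 0`; taking `w = 0`
gives `B (0, 0) = 0`, hence `A i w = 0` for every `w`.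
-/

theorem Finset.sum_apply_single_comp_of_injective {R ι ν Ω : Type*} [Semiring R] [Fintype ι]
    [DecidableEq ν] {W : ν → Type*} [∀ n, AddCommMonoid (W n)] [∀ n, Module R (W n)]
    [AddCommMonoid Ω] [Module R Ω] {e : ι → ν} (he : Function.Injective e)
    (A : ∀ j, W (e j) →ₗ[R] Ω) (i : ι) (w : W (e i)) :
    ∑ j, A j (Pi.single (e i) w (e j)) = A i w := by
  rw [Finset.sum_eq_single_of_mem i (Finset.mem_univ i), Pi.single_eq_same]
  intro j _ hji
  rw [Pi.single_eq_of_ne (he.ne hji), map_zero]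

section JetIdentity

variable {VF : Type*} {W : ℕ → Type*} [∀ k, AddCommGroup (W k)] [∀ k, Module ℝ (W k)]
  {Ω : Type*} [AddCommGroup Ω] [Module ℝ Ω] {jet : (k : ℕ) → VF → W k} {s : ℕ}
  {A : (i : Fin s) → (W ((i : ℕ) + 2) →ₗ[ℝ] Ω)} {B : W 0 × W 1 → Ω}

theorem apply_add_eq_zero_of_jet_identity
    (hsurj : ∀ (N : ℕ) (w : (k : ℕ) → W k), ∃ ξ : VF, ∀ k ≤ N, jet k ξ = w k)
    (hid : ∀ ξ : VF, (∑ i : Fin s, A i (jet ((i : ℕ) + 2) ξ)) + B (jet 0 ξ, jet 1 ξ) = 0)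
    (i : Fin s) (w : W ((i : ℕ) + 2)) :
    A i w + B (0, 0) = 0 := by
  obtain ⟨ξ, hξ⟩ := hsurj (s + 1) (Pi.single ((i : ℕ) + 2) w)
  have hsum : ∑ j : Fin s, A j (jet ((j : ℕ) + 2) ξ) = A i w := by
    rw [← Finset.sum_apply_single_comp_of_injective (e := fun j : Fin s => (j : ℕ) + 2)
      ((add_left_injective 2).comp Fin.val_injective) A i w]
    exact Finset.sum_congr rfl fun j _ => by rw [hξ _ (by omega)]
  have h0 : jet 0 ξ = 0 := by rw [hξ 0 (by omega), Pi.single_eq_of_ne (by omega)]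
  have h1 : jet 1 ξ = 0 := by rw [hξ 1 (by omega), Pi.single_eq_of_ne (by omega)]
  simpa only [hsum, h0, h1] using hid ξ

end JetIdentity

/-- Abstract form of the argument of Lemma 2.1.  Let `jet k ξ` denote the
`k`-th symmetrized derivative of the vector field `ξ` at a fixed point (with `jet 0 ξ` the
value of `ξ` itself), and suppose that, as for symmetrized covariant derivatives at a point
of a manifold with a torsion-free connection, the jets of any finite order can be
prescribed arbitrarily and independently (`hsurj`).  Suppose the local functional identity
`∑_{i=0}^{s-1} A_i (jet_{i+2} ξ) + B(jet₀ ξ, jet₁ ξ) = 0` holds for all `ξ` — the `i`-th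
term pairing the coefficient `A_i` with the highest-order jet appearing in the `i`-th
symmetrized derivative of `δC` (which depends on `ξ`-jets of order `i+2` and lower, the
lower-order dependence being absorbed into the lower terms and `B`).  Then each
coefficient vanishes: `A_i = 0` for `i = 0, …, s-1`. -/
theorem coefficients_vanish_from_jet_independence
    {VF : Type*} (W : ℕ → Type*)
    [∀ k, AddCommGroup (W k)] [∀ k, Module ℝ (W k)]
    {Ω : Type*} [AddCommGroup Ω] [Module ℝ Ω]
    (jet : (k : ℕ) → VF → W k)
    (hsurj : ∀ (N : ℕ) (w : (k : ℕ) → W k), ∃ ξ : VF, ∀ k ≤ N, jet k ξ = w k)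
    (s : ℕ)
    (A : (i : Fin s) → (W ((i : ℕ) + 2) →ₗ[ℝ] Ω))
    (B : W 0 × W 1 → Ω)
    (hid : ∀ ξ : VF,
      (∑ i : Fin s, A i (jet ((i : ℕ) + 2) ξ)) + B (jet 0 ξ, jet 1 ξ) = 0) :
    ∀ i : Fin s, A i = 0 := by
  intro i
  have hB : B (0, 0) = 0 := by
    simpa only [map_zero, zero_add] using apply_add_eq_zero_of_jet_identity hsurj hid i 0
  ext w
  simpa only [hB, add_zero, LinearMap.zero_apply] using apply_add_eq_zero_of_jet_identity hsurj hid i w
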